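/- arXiv:math/0411231 — 2 statements merged into one kernel-verified Lean document; each statement's English description precedes it below -/
import Mathlib

section
/- Let e ≥ 2 and let h = (1, 3, h_2, ..., h_{e-1}, h_e) be a symmetric sequence of positive integers (h_i = h_{e-i}). Suppose there exists a symmetric-with-respect-to-(e+1)/2 sequence a = (a_1 = 1, a_2, ..., a_e) (i.e. a_i = a_{e+1-i} for 1 ≤ i ≤ e) which is unimodal, such that the sequence Δ defined by Δ_0 = 1, Δ_1 = 2, and Δ_i = h_i - a_i for 2 ≤ i ≤ e is an O-sequence. Then h is unimodal. -/
/-- `msucc i n` is Macaulay's `n^{<i>}`: from the `i`-binomial expansion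
`n = C(n_i,i) + ... + C(n_j,j)` (computed greedily), replace each term
`C(n_k,k)` by `C(n_k+1,k+1)`.  By convention `msucc i 0 = 0` and `msucc 0 n = 0`. -/
def msucc : ℕ → ℕ → ℕ
  | 0, _ => 0
  | _ + 1, 0 => 0
  | (i + 1), (n + 1) =>
      let m := Nat.findGreatest (fun k => Nat.choose k (i + 1) ≤ n + 1) (n + i + 2)
      Nat.choose (m + 1) (i + 2) + msucc i ((n + 1) - Nat.choose m (i + 1))

/-- An (infinite) O-sequence: starts with 1 and satisfies Macaulay's growth condition. -/
def IsOSeq (h : ℕ → ℕ) : Prop :=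
  h 0 = 1 ∧ ∀ d, 1 ≤ d → h (d + 1) ≤ msucc d (h d)

/-- A finite O-sequence of length `d` (entries of degree `0,…,d`). -/
def FinOSeq (g : ℕ → ℕ) (d : ℕ) : Prop :=
  g 0 = 1 ∧ ∀ k, 1 ≤ k → k + 1 ≤ d → g (k + 1) ≤ msucc k (g k)

/-- First difference of a sequence, with `(Diff h) 0 = 1`. -/
def Diff (h : ℕ → ℕ) : ℕ → ℕ := fun k => if k = 0 then 1 else h k - h (k - 1)

/-- An SI-sequence of socle degree `e`: symmetric and its first half is differentiable. -/
def IsSISeq (h : ℕ → ℕ) (e : ℕ) : Prop :=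
  (∀ i ≤ e, h i = h (e - i)) ∧ FinOSeq (Diff h) (e / 2)

/-- Unimodality of `(h 0, …, h e)`. -/
def Unimodal (h : ℕ → ℕ) (e : ℕ) : Prop :=
  ∃ m ≤ e, (∀ i j, i ≤ j → j ≤ m → h i ≤ h j) ∧ (∀ i j, m ≤ i → i ≤ j → j ≤ e → h j ≤ h i)

/-
Write `h = Δ + a` on `1, …, e`. Since `Δ` is an O-sequence with `Δ₁ = 2`, Macaulay's bound gives
`Δᵢ ≤ i + 1`, and as soon as `Δᵢ ≤ i` the bound `Δᵢ^{<i>} = Δᵢ` makes `Δ` non-increasing from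
`i` on. Let `k + 1 ≤ e - k`. If `Δ_{k+1} ≥ Δ_k`, then `h_{k+1} ≥ h_k` because `a` increases on
its first half. Otherwise `Δ_{k+1} < Δ_k ≤ k + 1`, so `Δ_{e-k} ≤ Δ_{k+1}`, and with
`a_{e-k} = a_{k+1}` and the symmetry of `h` we get `h_k = h_{e-k} ≤ h_{k+1}`. Thus `h` increases
up to `(e+1)/2`, and symmetry does the rest.
-/

lemma msucc_succ_succ (i n : ℕ) : msucc (i + 1) (n + 1) =
    Nat.choose (Nat.findGreatest (fun k => Nat.choose k (i + 1) ≤ n + 1) (n + i + 2) + 1) (i + 2)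
      + msucc i (n + 1 - Nat.choose
          (Nat.findGreatest (fun k => Nat.choose k (i + 1) ≤ n + 1) (n + i + 2)) (i + 1)) :=
  rfl

lemma findGreatest_choose_le_of_le {i n : ℕ} (h : n ≤ i) :
    Nat.findGreatest (fun k => Nat.choose k (i + 1) ≤ n + 1) (n + i + 2) = i + 1 := by
  rw [Nat.findGreatest_eq_iff]
  refine ⟨by omega, fun _ => by simp, fun j hij _ hj => ?_⟩
  have : i + 2 ≤ Nat.choose j (i + 1) := by
    calc i + 2 = Nat.choose (i + 2) (i + 1) := (Nat.choose_succ_self_right (i + 1)).symm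
      _ ≤ Nat.choose j (i + 1) := Nat.choose_le_choose _ (by omega)
  omega

lemma findGreatest_choose_le_succ (i : ℕ) :
    Nat.findGreatest (fun k => Nat.choose k (i + 1) ≤ i + 1 + 1) (i + 1 + i + 2) = i + 2 := by
  rw [Nat.findGreatest_eq_iff]
  refine ⟨by omega, fun _ => by simp [Nat.choose_succ_self_right], fun j hij _ hj => ?_⟩
  have hmono : Nat.choose (i + 3) (i + 1) ≤ Nat.choose j (i + 1) :=
    Nat.choose_le_choose _ (by omega)
  have hpascal : Nat.choose (i + 3) (i + 1) = Nat.choose (i + 2) i + Nat.choose (i + 2) (i + 1) :=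
    Nat.choose_succ_succ _ _
  have hpos : 0 < Nat.choose (i + 2) i := Nat.choose_pos (by omega)
  rw [Nat.choose_succ_self_right] at hpascal
  omega

/-- For `n ≤ i` the `i`-binomial expansion is `n = C(i,i) + C(i-1,i-1) + ⋯`. -/
lemma msucc_of_le {i n : ℕ} (h : n ≤ i) : msucc i n = n := by
  induction i generalizing n with
  | zero =>
    obtain rfl : n = 0 := by omega
    rfl
  | succ i ih =>
    cases n with
    | zero => rfl
    | succ n =>
      rw [msucc_succ_succ, findGreatest_choose_le_of_le (by omega)]
      simp only [Nat.choose_self, add_tsub_cancel_right, ih (show n ≤ i by omega)]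
      omega

lemma msucc_succ_self (i : ℕ) : msucc (i + 1) (i + 2) = i + 3 := by
  rw [msucc_succ_succ, findGreatest_choose_le_succ]
  simp only [Nat.choose_succ_self_right, tsub_self, Nat.add_eq_left]
  cases i <;> rfl

namespace FinOSeq

variable {g : ℕ → ℕ} {d : ℕ}

lemma le_add_one (hg : FinOSeq g d) (hg1 : g 1 ≤ 2) {j : ℕ} (hj : 1 ≤ j) (hjd : j ≤ d) :
    g j ≤ j + 1 := by
  induction j, hj using Nat.le_induction with
  | base => exact hg1
  | succ j hj ih =>
    have hgrow := hg.2 j hj hjd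
    rcases Nat.lt_or_ge (g j) (j + 1) with hlt | hge
    · rw [msucc_of_le (by omega)] at hgrow
      omega
    · obtain ⟨i, rfl⟩ : ∃ i, j = i + 1 := ⟨j - 1, by omega⟩
      rw [show g (i + 1) = i + 2 by linarith [ih (by omega)], msucc_succ_self] at hgrow
      omega

lemma le_self_of_le {j : ℕ} (hg : FinOSeq g d) (hj : 1 ≤ j) (hgj : g j ≤ j) {l : ℕ}
    (hjl : j ≤ l) (hld : l ≤ d) : g l ≤ l := by
  induction l, hjl using Nat.le_induction with
  | base => exact hgj
  | succ l hjl ih =>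
    have hgrow := hg.2 l (by omega) hld
    rw [msucc_of_le (ih (by omega))] at hgrow
    linarith [ih (by omega)]

lemma antitoneOn_Icc {j : ℕ} (hg : FinOSeq g d) (hj : 1 ≤ j) (hgj : g j ≤ j) :
    AntitoneOn g (Set.Icc j d) :=
  antitoneOn_of_add_one_le Set.ordConnected_Icc fun l _ hl hl1 => by
    have hgrow := hg.2 l (by linarith [hl.1]) hl1.2
    rwa [msucc_of_le (hg.le_self_of_le hj hgj hl.1 hl.2)] at hgrow

end FinOSeq

lemma le_of_symm_of_unimodal {a : ℕ → ℕ} {e m i j : ℕ}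
    (hsym : ∀ k, 1 ≤ k → k ≤ e → a k = a (e + 1 - k))
    (hinc : ∀ k l, 1 ≤ k → k ≤ l → l ≤ m → a k ≤ a l)
    (hdec : ∀ k l, m ≤ k → k ≤ l → l ≤ e → a l ≤ a k)
    (hi : 1 ≤ i) (hij : i ≤ j) (hije : i + j ≤ e + 1) : a i ≤ a j := by
  rcases le_or_gt j m with hjm | hmj
  · exact hinc i j hi hij hjm
  · rw [hsym i hi (by omega)]
    exact hdec j (e + 1 - i) hmj.le (by omega) (by omega)

lemma le_succ_of_finOSeq_add {h a D : ℕ → ℕ} {e k : ℕ} (hD : FinOSeq D e) (hD1 : D 1 ≤ 2)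
    (hsum : ∀ i, 1 ≤ i → i ≤ e → h i = D i + a i) (hk : 1 ≤ k) (hke : k + 1 ≤ e - k)
    (hsym : h k = h (e - k)) (ha : a k ≤ a (k + 1)) (ha' : a (e - k) ≤ a (k + 1)) :
    h k ≤ h (k + 1) := by
  rw [hsum k hk (by omega)] at hsym ⊢
  rw [hsum (k + 1) (by omega) (by omega)]
  by_cases hDk : D k ≤ D (k + 1)
  · omega
  have hDk1 : D (k + 1) ≤ k + 1 := by linarith [hD.le_add_one hD1 hk (show k ≤ e by omega)]
  have hDek : D (e - k) ≤ D (k + 1) :=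
    hD.antitoneOn_Icc (by omega) hDk1 ⟨le_rfl, by omega⟩ ⟨hke, by omega⟩ hke
  calc D k + a k = h (e - k) := hsym
    _ = D (e - k) + a (e - k) := hsum (e - k) (by omega) (by omega)
    _ ≤ D (k + 1) + a (k + 1) := by omega

lemma unimodal_of_symm_of_monotoneOn {h : ℕ → ℕ} {e : ℕ} (hsym : ∀ i ≤ e, h i = h (e - i))
    (hmono : MonotoneOn h (Set.Iic ((e + 1) / 2))) : Unimodal h e := by
  refine ⟨(e + 1) / 2, by omega,
    fun i j hij hj => hmono (Set.mem_Iic.2 (by omega)) hj hij, fun i j hi hij hj => ?_⟩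
  rw [hsym i (by omega), hsym j hj]
  exact hmono (Set.mem_Iic.2 (by omega)) (Set.mem_Iic.2 (by omega)) (by omega)

theorem stmt10_general (e : ℕ) (h a : ℕ → ℕ)
    (h0 : h 0 = 1) (h1 : h 1 = 3)
    (hsym : ∀ i ≤ e, h i = h (e - i))
    (ha1 : a 1 = 1)
    (hasym : ∀ k, 1 ≤ k → k ≤ e → a k = a (e + 1 - k))
    (haun : ∃ m, 1 ≤ m ∧ m ≤ e ∧ (∀ k l, 1 ≤ k → k ≤ l → l ≤ m → a k ≤ a l) ∧
      (∀ k l, m ≤ k → k ≤ l → l ≤ e → a l ≤ a k))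
    (hah : ∀ k, 2 ≤ k → k ≤ e → a k ≤ h k)
    (hΔ : FinOSeq (fun k => if k = 0 then 1 else if k = 1 then 2 else h k - a k) e) :
    Unimodal h e := by
  obtain ⟨m, -, -, hinc, hdec⟩ := haun
  have hsum : ∀ i, 1 ≤ i → i ≤ e →
      h i = (if i = 0 then 1 else if i = 1 then 2 else h i - a i) + a i := by
    intro i hi hie
    rcases eq_or_lt_of_le hi with rfl | hi
    · simp [h1, ha1]
    · simp only [if_neg (show i ≠ 0 by omega), if_neg (show i ≠ 1 by omega)]
      have := hah i hi hie
      omega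
  refine unimodal_of_symm_of_monotoneOn hsym <|
    monotoneOn_of_le_add_one Set.ordConnected_Iic fun k _ _ hk => ?_
  rcases Nat.eq_zero_or_pos k with rfl | hk0
  · simp [h0, h1]
  have hke : k + 1 ≤ e - k := by simp only [Set.mem_Iic] at hk; omega
  exact le_succ_of_finOSeq_add hΔ (by simp) hsum hk0 hke (hsym k (by omega))
    (le_of_symm_of_unimodal hasym hinc hdec hk0 (by omega) (by omega))
    (by rw [hasym (k + 1) (by omega) (by omega), Nat.add_sub_add_right])

/-- Unimodality step of the elementary proof of Stanley's codimension 3 theorem: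
if `h = (1,3,h₂,…,h_e)` is symmetric positive and there is a unimodal sequence
`a = (a₁ = 1, a₂, …, a_e)` symmetric about `(e+1)/2` such that
`Δ = (1, 2, h₂ - a₂, …, h_e - a_e)` is an O-sequence, then `h` is unimodal. -/
theorem stmt10 (e : ℕ) (he : 2 ≤ e) (h a : ℕ → ℕ)
    (h0 : h 0 = 1) (h1 : h 1 = 3) (hpos : ∀ i ≤ e, 0 < h i)
    (hsym : ∀ i ≤ e, h i = h (e - i))
    (ha1 : a 1 = 1)
    (hasym : ∀ k, 1 ≤ k → k ≤ e → a k = a (e + 1 - k))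
    (haun : ∃ m, 1 ≤ m ∧ m ≤ e ∧ (∀ k l, 1 ≤ k → k ≤ l → l ≤ m → a k ≤ a l) ∧
      (∀ k l, m ≤ k → k ≤ l → l ≤ e → a l ≤ a k))
    (hah : ∀ k, 2 ≤ k → k ≤ e → a k ≤ h k)
    (hΔ : FinOSeq (fun k => if k = 0 then 1 else if k = 1 then 2 else h k - a k) e) :
    Unimodal h e :=
  stmt10_general e h a h0 h1 hsym ha1 hasym haun hah hΔ
end

section
/- For every positive integer i and integers m, n with i < m < n, one has C(m, i)^{<i>} < C(n, i)^{<i>}, and moreover C(n, i)^{<i>} = C(n+1, i+1). -/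
namespace Nat

theorem choose_succ_lt_choose_succ {k n m : ℕ} (hkn : k ≤ n) (hnm : n < m) :
    n.choose (k + 1) < m.choose (k + 1) :=
  calc n.choose (k + 1) < n.choose k + n.choose (k + 1) :=
        Nat.lt_add_of_pos_left (choose_pos hkn)
    _ = (n + 1).choose (k + 1) := (choose_succ_succ' n k).symm
    _ ≤ m.choose (k + 1) := choose_le_choose _ hnm

theorem le_choose_succ_add (n k : ℕ) : n ≤ n.choose (k + 1) + k := by
  induction n with
  | zero => exact zero_le _
  | succ n ih =>
    rcases lt_or_ge n k with hnk | hkn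
    · omega
    · have := choose_succ_lt_choose_succ hkn (lt_add_one n)
      omega

theorem findGreatest_choose_le_choose {k n b : ℕ} (hkn : k ≤ n) (hnb : n ≤ b) :
    findGreatest (fun m => m.choose (k + 1) ≤ n.choose (k + 1)) b = n :=
  findGreatest_eq_iff.2 ⟨hnb, fun _ => le_rfl, fun _ hnm _ =>
    (choose_succ_lt_choose_succ hkn hnm).not_ge⟩

end Nat

theorem msucc_zero (i : ℕ) : msucc i 0 = 0 := by
  cases i <;> rfl

-- The greedy search in `msucc` finds `n` itself (its range contains `n` by `le_choose_succ_add`),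
-- so the expansion of `C(n, i)` is the single term `C(n, i)` and the remainder is `0`.
theorem msucc_choose {i n : ℕ} (hi : 0 < i) (hin : i ≤ n) :
    msucc i (n.choose i) = (n + 1).choose (i + 1) := by
  obtain ⟨k, rfl⟩ := Nat.exists_eq_add_one_of_ne_zero hi.ne'
  obtain ⟨N, hN⟩ := Nat.exists_eq_add_one_of_ne_zero (Nat.choose_pos hin).ne'
  have hbound : n ≤ N + k + 2 := by
    have := Nat.le_choose_succ_add n k
    omega
  rw [hN, msucc, ← hN, Nat.findGreatest_choose_le_choose (by omega) hbound, Nat.sub_self,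
    msucc_zero, add_zero]

/-- For `i < m < n`, one has `C(m,i)^{<i>} < C(n,i)^{<i>}`, and
`C(n,i)^{<i>} = C(n+1, i+1)`. -/
theorem stmt15 (i m n : ℕ) (hi : 0 < i) (him : i < m) (hmn : m < n) :
    msucc i (Nat.choose m i) < msucc i (Nat.choose n i) ∧
    msucc i (Nat.choose n i) = Nat.choose (n + 1) (i + 1) := by
  rw [msucc_choose hi him.le, msucc_choose hi (him.trans hmn).le]
  exact ⟨Nat.choose_succ_lt_choose_succ (by omega) (by omega), rfl⟩
end
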